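/- arXiv:1304.2523 — 3 statements merged into one kernel-verified Lean document; each statement's English description precedes it below -/
import Mathlib

section
/- Let R be a (q,s) chain ring and let A be an n×m matrix over R. Then the shape of A equals the shape of its transpose Aᵀ. -/
open scoped BigOperators

section ChainRingDefs

variable {R : Type*} [CommRing R]

/-- For a shape `μ = (μ₁,…,μ_s)` (0-indexed as `μ : Fin s → ℕ`), the exponent of `π`
governing the `j`-th coordinate (0-indexed) of the module `R^μ`: the number of
components of `μ` that are `≤ j`. -/
def shapeExp {s : ℕ} (μ : Fin s → ℕ) (j : ℕ) : ℕ :=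
  (Finset.univ.filter fun i : Fin s => μ i ≤ j).card

/-- The last (largest) component `μ_s` of a shape (for monotone `μ`). -/
def shapeLast {s : ℕ} (μ : Fin s → ℕ) : ℕ := Finset.univ.sup μ

/-- The module `R^μ = ⟨1⟩^{μ₁} × ⟨π⟩^{μ₂−μ₁} × ⋯ × ⟨π^{s−1}⟩^{μ_s−μ_{s−1}}`,
realized as a submodule of `R^{μ_s}`. -/
def shapeModule (R : Type*) [CommRing R] (π : R) {s : ℕ} (μ : Fin s → ℕ) :
    Submodule R (Fin (shapeLast μ) → R) :=
  Submodule.pi Set.univ fun j => Ideal.span {π ^ shapeExp μ (j : ℕ)}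

/-- The module `M` has shape `μ`, i.e. `M ≅ R^μ`. -/
def HasShape (R : Type*) [CommRing R] (π : R) {s : ℕ} (μ : Fin s → ℕ)
    (M : Type*) [AddCommGroup M] [Module R M] : Prop :=
  Nonempty (M ≃ₗ[R] shapeModule R π μ)

/-- The row span of a matrix: the submodule of `R^m` generated by its rows. -/
def rowSpan (R : Type*) [CommRing R] {n m : ℕ} (A : Matrix (Fin n) (Fin m) R) :
    Submodule R (Fin m → R) :=
  Submodule.span R (Set.range fun i => A i)

-- The degree of `a ∈ R`: the unique `l` with `a ∈ ⟨π^l⟩ \ ⟨π^{l+1}⟩` for `a ≠ 0`,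
-- and `s` for `a = 0`.
open Classical in
noncomputable def degR (π : R) (s : ℕ) (a : R) : ℕ :=
  if a = 0 then s else sSup {l : ℕ | a ∈ Ideal.span {π ^ l}}

/-- `j` is the pivot position of the row `r`: the earliest entry among the entries of
least degree in that row. -/
def IsPivotIdx (π : R) (s : ℕ) {m : ℕ} (r : Fin m → R) (j : Fin m) : Prop :=
  (∀ k, degR π s (r j) ≤ degR π s (r k)) ∧ ∀ k, k < j → degR π s (r j) < degR π s (r k)

/-- `V` is a complete set of residues modulo `π` containing `0`. -/
def IsCompleteResidues (π : R) (V : Set R) : Prop :=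
  0 ∈ V ∧ ∀ a : R, ∃! v, v ∈ V ∧ a - v ∈ Ideal.span {π}

/-- The set `R(R,π^l) = {Σ_{i<l} a_i π^i : a_i ∈ V}` of residues modulo `π^l`. -/
def residueSet (π : R) (V : Set R) (l : ℕ) : Set R :=
  {x | ∃ a : Fin l → R, (∀ i, a i ∈ V) ∧ x = ∑ i, a i * π ^ (i : ℕ)}

/-- The matrix `A` is in row canonical form (with respect to the residue set `V`). -/
def IsRCF (π : R) (s : ℕ) (V : Set R) {n m : ℕ} (A : Matrix (Fin n) (Fin m) R) : Prop :=
  -- (1) nonzero rows lie above zero rows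
  (∀ i i' : Fin n, i < i' → A i' ≠ 0 → A i ≠ 0) ∧
  -- (2) pivots of smaller degree lie above pivots of larger degree; among pivots of
  -- equal degree, earlier pivots lie above later ones
  (∀ i i' : Fin n, ∀ j j' : Fin m, i < i' → A i ≠ 0 → A i' ≠ 0 →
      IsPivotIdx π s (A i) j → IsPivotIdx π s (A i') j' →
      degR π s (A i j) ≤ degR π s (A i' j') ∧
        (degR π s (A i j) = degR π s (A i' j') → j ≤ j')) ∧
  -- (3) every pivot equals `π^l` for some `0 ≤ l ≤ s-1`
  (∀ i : Fin n, ∀ j : Fin m, A i ≠ 0 → IsPivotIdx π s (A i) j →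
      degR π s (A i j) < s ∧ A i j = π ^ degR π s (A i j)) ∧
  -- (4) entries below a pivot in its column are zero; entries above lie in `R(R,π^l)`
  (∀ i : Fin n, ∀ j : Fin m, A i ≠ 0 → IsPivotIdx π s (A i) j →
      (∀ i' : Fin n, i < i' → A i' j = 0) ∧
      (∀ i' : Fin n, i' < i → A i' j ∈ residueSet π V (degR π s (A i j))))

/-- For a shape `κ` (0-indexed) and `i : Fin s`, the previous component `κ_{i-1}`
(`0` when `i = 0`); with the paper's 1-indexed convention this is `κ_i` for the
0-indexed position `i` (whose 1-indexed position is `i+1`). -/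
def prevVal {s : ℕ} (κ : Fin s → ℕ) (i : Fin s) : ℕ :=
  if (i : ℕ) = 0 then 0
  else κ ⟨(i : ℕ) - 1, lt_of_le_of_lt (Nat.sub_le _ _) i.isLt⟩

end ChainRingDefs

/-! Over a ring in which divisibility is total, such as a chain ring (where every element is a
unit times a power of `π`), pick an entry `a` of `A` dividing all others. Invertible row and
column operations clear the rest of its row and column, leaving `a` and a smaller matrix `C`.
Multiplying by invertible matrices on either side changes the row span only up to isomorphism,
and this applies to `A` and `Aᵀ` alike; after clearing, the row span is `⟨a⟩ × rowSpan C` and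
that of the transpose is `⟨a⟩ × rowSpan Cᵀ`. By induction `rowSpan A ≅ rowSpan Aᵀ`, so the two
modules have the same shape. -/

open Matrix

theorem PreValuationRing.dvd_or_dvd {R : Type*} [Semigroup R] [PreValuationRing R] (a b : R) :
    a ∣ b ∨ b ∣ a := by
  obtain ⟨c, h | h⟩ := PreValuationRing.cond a b
  · exact .inl ⟨c, h.symm⟩
  · exact .inr ⟨c, h.symm⟩

theorem PreValuationRing.exists_dvd_forall {R ι : Type*} [CommMonoid R] [PreValuationRing R]
    [Finite ι] [Nonempty ι] (f : ι → R) : ∃ i, ∀ j, f i ∣ f j := by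
  obtain ⟨i, -, hi⟩ := Set.finite_univ.exists_minimalFor (Associates.mk ∘ f) Set.univ
    Set.univ_nonempty
  refine ⟨i, fun j => ?_⟩
  rcases dvd_or_dvd (f i) (f j) with h | h
  · exact h
  · exact Associates.mk_le_mk_iff_dvd.1 (hi (Set.mem_univ j) (Associates.mk_le_mk_iff_dvd.2 h))

section

variable {R : Type*} [CommRing R]

theorem IsLocalRing.exists_eq_unit_mul_pow [IsLocalRing R] {π : R}
    (hmax : maximalIdeal R = Ideal.span {π}) {s : ℕ} (hnil : π ^ s = 0) (a : R) :
    ∃ u : Rˣ, ∃ d : ℕ, a = u * π ^ d := by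
  suffices h : ∀ k t, s ≤ t + k → ∀ c : R, ∃ u : Rˣ, ∃ d : ℕ, π ^ t * c = u * π ^ d by
    simpa using h s 0 (by omega) a
  intro k
  induction k with
  | zero =>
    intro t ht c
    exact ⟨1, s, by rw [pow_eq_zero_of_le (by omega) hnil, hnil]; simp⟩
  | succ k ih =>
    intro t ht c
    by_cases hc : IsUnit c
    · exact ⟨hc.unit, t, mul_comm _ _⟩
    · obtain ⟨c', rfl⟩ : π ∣ c := by
        rwa [← Ideal.mem_span_singleton, ← hmax, mem_maximalIdeal, mem_nonunits_iff]
      rw [← mul_assoc, ← pow_succ]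
      exact ih (t + 1) (by omega) c'

theorem IsLocalRing.preValuationRing_of_maximalIdeal_eq_span [IsLocalRing R] {π : R}
    (hmax : maximalIdeal R = Ideal.span {π}) {s : ℕ} (hnil : π ^ s = 0) :
    PreValuationRing R where
  cond' a b := by
    have hdvd : a ∣ b ∨ b ∣ a := by
      obtain ⟨u, d, rfl⟩ := exists_eq_unit_mul_pow hmax hnil a
      obtain ⟨v, e, rfl⟩ := exists_eq_unit_mul_pow hmax hnil b
      simp only [Units.mul_left_dvd, Units.dvd_mul_left]
      exact (le_total d e).imp (pow_dvd_pow π) (pow_dvd_pow π)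
    rcases hdvd with ⟨c, hc⟩ | ⟨c, hc⟩
    exacts [⟨c, .inl hc.symm⟩, ⟨c, .inr hc.symm⟩]

theorem Matrix.exists_isUnit_mul_eq_zero_of_dvd {ι κ : Type*} [Fintype ι] [DecidableEq ι]
    (A : Matrix ι κ R) (i₀ : ι) (j₀ : κ) (hdvd : ∀ i, A i₀ j₀ ∣ A i j₀) :
    ∃ P : Matrix ι ι R, IsUnit P ∧ (P * A) i₀ = A i₀ ∧ ∀ i ≠ i₀, (P * A) i j₀ = 0 := by
  choose c hc using hdvd
  -- Zeroing `c i₀` keeps row `i₀` fixed and makes `N` square-zero.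
  set c' := Function.update c i₀ 0
  set N := vecMulVec c' (Pi.single i₀ 1)
  have hN : N * N = 0 := by
    simp [N, vecMulVec_mul_vecMulVec, c']
  have hNA : (1 - N) * A = A - vecMulVec c' (A.row i₀) := by
    rw [Matrix.sub_mul, Matrix.one_mul, vecMulVec_mul, single_one_vecMul]
  refine ⟨1 - N, IsNilpotent.isUnit_one_sub ⟨2, by rw [sq, hN]⟩, ?_, fun i hi => ?_⟩
  · ext j
    simp [hNA, c', vecMulVec_apply]
  · simp only [hNA, sub_apply, vecMulVec_apply, Function.update_of_ne hi, row_apply, c', hc i]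
    ring

theorem Matrix.exists_isUnit_mul_mul_eq_zero_of_dvd {ι κ : Type*} [Fintype ι] [DecidableEq ι]
    [Fintype κ] [DecidableEq κ] (A : Matrix ι κ R) (i₀ : ι) (j₀ : κ)
    (hcol : ∀ i, A i₀ j₀ ∣ A i j₀) (hrow : ∀ j, A i₀ j₀ ∣ A i₀ j) :
    ∃ (P : Matrix ι ι R) (Q : Matrix κ κ R), IsUnit P ∧ IsUnit Q ∧
      (∀ j ≠ j₀, (P * A * Q) i₀ j = 0) ∧ ∀ i ≠ i₀, (P * A * Q) i j₀ = 0 := by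
  obtain ⟨P, hP, hProw, hPcol⟩ := A.exists_isUnit_mul_eq_zero_of_dvd i₀ j₀ hcol
  have hrow' : ∀ j, (P * A)ᵀ j₀ i₀ ∣ (P * A)ᵀ j i₀ := by
    simpa [hProw] using hrow
  obtain ⟨Q, hQ, hQrow, hQcol⟩ := (P * A)ᵀ.exists_isUnit_mul_eq_zero_of_dvd j₀ i₀ hrow'
  have hPAQ : P * A * Qᵀ = (Q * (P * A)ᵀ)ᵀ := by
    rw [transpose_mul, transpose_transpose]
  refine ⟨P, Qᵀ, hP, (isUnit_transpose Q).2 hQ, fun j hj => ?_, fun i hi => ?_⟩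
  · rw [hPAQ, transpose_apply, hQcol j hj]
  · rw [hPAQ, transpose_apply, hQrow, transpose_apply, hPcol i hi]

def Submodule.prodEquiv {M N : Type*} [AddCommGroup M] [AddCommGroup N] [Module R M]
    [Module R N] (p : Submodule R M) (q : Submodule R N) : p.prod q ≃ₗ[R] p × q where
  toFun x := (⟨x.1.1, x.2.1⟩, ⟨x.1.2, x.2.2⟩)
  invFun x := ⟨(x.1, x.2), x.1.2, x.2.2⟩
  map_add' _ _ := rfl
  map_smul' _ _ := rfl
  left_inv _ := rfl
  right_inv _ := rfl

variable {n m : ℕ}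

variable (R) in
def LinearEquiv.piFinSuccAbove (j : Fin (m + 1)) : (Fin (m + 1) → R) ≃ₗ[R] R × (Fin m → R) :=
  (LinearEquiv.funCongrLeft R R (finSuccEquiv' j).symm).trans (LinearEquiv.piOptionEquivProd R)

theorem LinearEquiv.piFinSuccAbove_apply (j : Fin (m + 1)) (x : Fin (m + 1) → R) :
    LinearEquiv.piFinSuccAbove R j x = (x j, j.removeNth x) := rfl

theorem rowSpan_eq_range_vecMulLinear (A : Matrix (Fin n) (Fin m) R) :
    rowSpan R A = LinearMap.range A.vecMulLinear :=
  (range_vecMulLinear A).symm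

theorem rowSpan_mul_mul {P : Matrix (Fin n) (Fin n) R} (hP : IsUnit P)
    (A : Matrix (Fin n) (Fin m) R) (Q : Matrix (Fin m) (Fin m) R) :
    rowSpan R (P * A * Q) = (rowSpan R A).map Q.vecMulLinear := by
  have hcomp : (P * A * Q).vecMulLinear = Q.vecMulLinear ∘ₗ A.vecMulLinear ∘ₗ P.vecMulLinear :=
    LinearMap.ext fun x => by simp [Matrix.vecMul_vecMul]
  rw [rowSpan_eq_range_vecMulLinear, rowSpan_eq_range_vecMulLinear, hcomp, LinearMap.range_comp,
    LinearMap.range_comp_of_range_eq_top]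
  exact LinearMap.range_eq_top.2 (vecMul_surjective_iff_isUnit.2 hP)

noncomputable def rowSpanMulMulEquiv {P : Matrix (Fin n) (Fin n) R} {Q : Matrix (Fin m) (Fin m) R}
    (hP : IsUnit P) (hQ : IsUnit Q) (A : Matrix (Fin n) (Fin m) R) :
    rowSpan R (P * A * Q) ≃ₗ[R] rowSpan R A :=
  (LinearEquiv.ofEq _ _ (rowSpan_mul_mul hP A Q)).trans
    (Submodule.equivMapOfInjective _ (vecMul_injective_of_isUnit hQ) _).symm

theorem rowSpan_map_piFinSuccAbove (A : Matrix (Fin (n + 1)) (Fin (m + 1)) R)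
    (i₀ : Fin (n + 1)) (j₀ : Fin (m + 1)) (hrow : ∀ j ≠ j₀, A i₀ j = 0)
    (hcol : ∀ i ≠ i₀, A i j₀ = 0) :
    (rowSpan R A).map (LinearEquiv.piFinSuccAbove R j₀).toLinearMap =
      (R ∙ A i₀ j₀).prod (rowSpan R (A.submatrix i₀.succAbove j₀.succAbove)) := by
  set C := A.submatrix i₀.succAbove j₀.succAbove
  have hrange : Set.range A.row = insert (A.row i₀) (Set.range (i₀.removeNth A.row)) := by
    conv_lhs => rw [← Fin.insertNth_self_removeNth i₀ A.row]
    exact Fin.range_insertNth _ _ _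
  have hpivot : LinearEquiv.piFinSuccAbove R j₀ (A.row i₀) = LinearMap.inl R R _ (A i₀ j₀) := by
    rw [LinearEquiv.piFinSuccAbove_apply, LinearMap.inl_apply, Prod.mk.injEq]
    exact ⟨rfl, funext fun j => hrow _ (Fin.succAbove_ne j₀ j)⟩
  have hrest : LinearEquiv.piFinSuccAbove R j₀ ∘ i₀.removeNth A.row =
      LinearMap.inr R R _ ∘ C.row := by
    funext i
    simp only [Function.comp_apply, LinearEquiv.piFinSuccAbove_apply, LinearMap.inr_apply,
      Prod.mk.injEq]
    exact ⟨hcol _ (Fin.succAbove_ne i₀ i), rfl⟩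
  calc (Submodule.span R (Set.range A.row)).map (LinearEquiv.piFinSuccAbove R j₀).toLinearMap
      = (R ∙ A i₀ j₀).map (LinearMap.inl R R _) ⊔ (rowSpan R C).map (LinearMap.inr R R _) := by
        rw [Submodule.map_span, hrange, Set.image_insert_eq, Submodule.span_insert,
          ← Set.range_comp, LinearEquiv.coe_coe, hrest, hpivot, Set.range_comp,
          ← Submodule.map_span, ← Set.image_singleton (f := LinearMap.inl R R _),
          Submodule.span_image]
        rfl
    _ = _ := by
        rw [Submodule.map_inl, Submodule.map_inr, Submodule.prod_sup_prod, sup_bot_eq, bot_sup_eq]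

noncomputable def rowSpanEquivProd (A : Matrix (Fin (n + 1)) (Fin (m + 1)) R)
    (i₀ : Fin (n + 1)) (j₀ : Fin (m + 1)) (hrow : ∀ j ≠ j₀, A i₀ j = 0)
    (hcol : ∀ i ≠ i₀, A i j₀ = 0) :
    rowSpan R A ≃ₗ[R] (R ∙ A i₀ j₀) × rowSpan R (A.submatrix i₀.succAbove j₀.succAbove) :=
  ((LinearEquiv.piFinSuccAbove R j₀).submoduleMap (rowSpan R A)).trans <|
    (LinearEquiv.ofEq _ _ (rowSpan_map_piFinSuccAbove A i₀ j₀ hrow hcol)).trans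
      (Submodule.prodEquiv _ _)

theorem nonempty_rowSpan_zero_equiv_rowSpan_transpose :
    Nonempty (rowSpan R (0 : Matrix (Fin n) (Fin m) R) ≃ₗ[R]
      rowSpan R (0 : Matrix (Fin n) (Fin m) R)ᵀ) := by
  have hzero : ∀ {k l : ℕ}, rowSpan R (0 : Matrix (Fin k) (Fin l) R) = ⊥ :=
    Submodule.span_eq_bot.2 (by rintro _ ⟨i, rfl⟩; rfl)
  rw [transpose_zero]
  exact ⟨(LinearEquiv.ofEq _ _ hzero).trans <| Submodule.botEquivPUnit.trans <|
    Submodule.botEquivPUnit.symm.trans (LinearEquiv.ofEq _ _ hzero.symm)⟩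

theorem nonempty_rowSpan_equiv_rowSpan_transpose [PreValuationRing R]
    (A : Matrix (Fin n) (Fin m) R) : Nonempty (rowSpan R A ≃ₗ[R] rowSpan R Aᵀ) := by
  induction n generalizing m with
  | zero =>
    obtain rfl := Subsingleton.elim A 0
    exact nonempty_rowSpan_zero_equiv_rowSpan_transpose
  | succ n ih =>
    cases m with
    | zero =>
      obtain rfl := Subsingleton.elim A 0
      exact nonempty_rowSpan_zero_equiv_rowSpan_transpose
    | succ m =>
      obtain ⟨⟨i₀, j₀⟩, hpivot⟩ :=
        PreValuationRing.exists_dvd_forall fun p : Fin (n + 1) × Fin (m + 1) => A p.1 p.2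
      obtain ⟨P, Q, hP, hQ, hrow, hcol⟩ := A.exists_isUnit_mul_mul_eq_zero_of_dvd i₀ j₀
        (fun i => hpivot (i, j₀)) (fun j => hpivot (i₀, j))
      set B := P * A * Q
      have hBT : Bᵀ = Qᵀ * Aᵀ * Pᵀ := by simp only [B, transpose_mul, Matrix.mul_assoc]
      obtain ⟨e⟩ := ih (B.submatrix i₀.succAbove j₀.succAbove)
      exact ⟨(rowSpanMulMulEquiv hP hQ A).symm ≪≫ₗ rowSpanEquivProd B i₀ j₀ hrow hcol ≪≫ₗ
        (LinearEquiv.refl R _).prodCongr e ≪≫ₗ (rowSpanEquivProd Bᵀ j₀ i₀ hcol hrow).symm ≪≫ₗ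
        LinearEquiv.ofEq _ _ (congrArg (rowSpan R) hBT) ≪≫ₗ
        rowSpanMulMulEquiv ((isUnit_transpose Q).2 hQ) ((isUnit_transpose P).2 hP) Aᵀ⟩

end

theorem shape_transpose_general {R : Type*} [CommRing R] [IsLocalRing R]
    (s : ℕ) (π : R)
    (hmax : IsLocalRing.maximalIdeal R = Ideal.span {π})
    (hnil : π ^ s = 0)
    {n m : ℕ} (A : Matrix (Fin n) (Fin m) R)
    (μ : Fin s → ℕ) :
    HasShape R π μ ↥(rowSpan R A) ↔ HasShape R π μ ↥(rowSpan R A.transpose) := by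
  have := IsLocalRing.preValuationRing_of_maximalIdeal_eq_span hmax hnil
  obtain ⟨e⟩ := nonempty_rowSpan_equiv_rowSpan_transpose A
  exact ⟨fun ⟨f⟩ => ⟨e.symm ≪≫ₗ f⟩, fun ⟨f⟩ => ⟨e ≪≫ₗ f⟩⟩

/-- The shape of a matrix over a finite chain ring equals the shape of its transpose. -/
theorem shape_transpose {R : Type*} [CommRing R] [Fintype R] [IsLocalRing R] [IsPrincipalIdealRing R]
    (q s : ℕ) (hs : 0 < s) (π : R)
    (hmax : IsLocalRing.maximalIdeal R = Ideal.span {π})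
    (hnil : π ^ s = 0) (hnil' : π ^ (s - 1) ≠ 0)
    (hq : Nat.card (IsLocalRing.ResidueField R) = q)
    {n m : ℕ} (A : Matrix (Fin n) (Fin m) R)
    (μ : Fin s → ℕ) (hμ : Monotone μ) :
    HasShape R π μ ↥(rowSpan R A) ↔ HasShape R π μ ↥(rowSpan R A.transpose) :=
  shape_transpose_general s π hmax hnil A μ
end

section
/- Let R be a (q,s) chain ring and let A be an n×m matrix over R in row canonical form. For each nonzero row k, let p_k be its pivot, c_k the index of the column containing p_k, and d_k = deg(p_k) (for a zero row set p_k = 0, c_k = 0, d_k = s). Then: (i) for all i ≥ k and all j, deg(A[i,j]) ≥ d_k; and (ii) if (i ≥ k and j < c_k) or (i > k and j ≤ c_k), then deg(A[i,j]) > d_k. -/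
open scoped BigOperators

/-!
Below row `k`, a nonzero row has a pivot of degree at least `d_k` by condition (2), and that
pivot has the least degree in its row. Strictness to the left of column `c` comes from the
tie-break in (2) together with the pivot being the earliest entry of least degree; in column
`c` itself the entries below the pivot vanish by (4). Zero entries have degree `s`, which
exceeds `d_k` by (3).
-/

section RowCanonicalForm

variable {R : Type*} [CommRing R] {π : R} {s : ℕ}

@[simp]
lemma degR_zero : degR π s (0 : R) = s := if_pos rfl

lemma exists_isPivotIdx {m : ℕ} {r : Fin m → R} (hr : r ≠ 0) : ∃ j, IsPivotIdx π s r j := by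
  obtain ⟨j₀, -⟩ := Function.ne_iff.mp hr
  obtain ⟨j, -, hj⟩ := Finset.exists_min_image Finset.univ
    (fun j => toLex (degR π s (r j), j)) ⟨j₀, Finset.mem_univ _⟩
  have hlex : ∀ k, degR π s (r j) < degR π s (r k) ∨
      degR π s (r j) = degR π s (r k) ∧ j ≤ k := fun k =>
    Prod.Lex.toLex_le_toLex.mp (hj k (Finset.mem_univ k))
  refine ⟨j, fun k => ?_, fun k hkj => ?_⟩
  · rcases hlex k with h | ⟨h, -⟩
    exacts [h.le, h.le]
  · rcases hlex k with h | ⟨-, h⟩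
    exacts [h, absurd hkj h.not_gt]

namespace IsRCF

variable {V : Set R} {n m : ℕ} {A : Matrix (Fin n) (Fin m) R} {k i : Fin n} {c j : Fin m}

lemma degR_pivot_lt (hA : IsRCF π s V A) (hk : A k ≠ 0) (hc : IsPivotIdx π s (A k) c) :
    degR π s (A k c) < s :=
  (hA.2.2.1 k c hk hc).1

lemma degR_pivot_le_of_lt (hA : IsRCF π s V A) (hk : A k ≠ 0) (hc : IsPivotIdx π s (A k) c)
    (hki : k < i) (j : Fin m) : degR π s (A k c) ≤ degR π s (A i j) := by
  by_cases hi : A i = 0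
  · rw [hi, Pi.zero_apply, degR_zero]
    exact (hA.degR_pivot_lt hk hc).le
  obtain ⟨c', hc'⟩ := exists_isPivotIdx hi
  exact (hA.2.1 k i c c' hki hk hi hc hc').1.trans (hc'.1 j)

lemma degR_pivot_lt_of_lt_of_le (hA : IsRCF π s V A) (hk : A k ≠ 0)
    (hc : IsPivotIdx π s (A k) c) (hki : k < i) (hjc : j ≤ c) :
    degR π s (A k c) < degR π s (A i j) := by
  obtain rfl | hjc := hjc.eq_or_lt
  · rw [(hA.2.2.2 k j hk hc).1 i hki, degR_zero]
    exact hA.degR_pivot_lt hk hc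
  by_cases hi : A i = 0
  · rw [hi, Pi.zero_apply, degR_zero]
    exact hA.degR_pivot_lt hk hc
  obtain ⟨c', hc'⟩ := exists_isPivotIdx hi
  obtain ⟨hle, htie⟩ := hA.2.1 k i c c' hki hk hi hc hc'
  rcases hle.lt_or_eq with hlt | heq
  · exact hlt.trans_le (hc'.1 j)
  · exact heq ▸ hc'.2 j (hjc.trans_le (htie heq))

end IsRCF

end RowCanonicalForm

theorem rcf_degree_bounds_general {R : Type*} [CommRing R]
    (s : ℕ) (π : R)
    (V : Set R)
    {n m : ℕ} (A : Matrix (Fin n) (Fin m) R) (hA : IsRCF π s V A)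
    (k : Fin n) (hk : A k ≠ 0) (c : Fin m) (hc : IsPivotIdx π s (A k) c) :
    (∀ i : Fin n, k ≤ i → ∀ j : Fin m, degR π s (A k c) ≤ degR π s (A i j)) ∧
    (∀ i : Fin n, ∀ j : Fin m, ((k ≤ i ∧ j < c) ∨ (k < i ∧ j ≤ c)) →
      degR π s (A k c) < degR π s (A i j)) := by
  refine ⟨fun i hki j => ?_, fun i j hij => ?_⟩
  · obtain rfl | hki := hki.eq_or_lt
    · exact hc.1 j
    · exact hA.degR_pivot_le_of_lt hk hc hki j
  · rcases hij with ⟨hki, hjc⟩ | ⟨hki, hjc⟩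
    · obtain rfl | hki := hki.eq_or_lt
      · exact hc.2 j hjc
      · exact hA.degR_pivot_lt_of_lt_of_le hk hc hki hjc.le
    · exact hA.degR_pivot_lt_of_lt_of_le hk hc hki hjc

/-- In a row canonical form, entries in rows at or below row `k` have degree at least
the pivot degree `d_k`, strictly greater in the indicated region. -/
theorem rcf_degree_bounds {R : Type*} [CommRing R] [Fintype R] [IsLocalRing R] [IsPrincipalIdealRing R]
    (q s : ℕ) (hs : 0 < s) (π : R)
    (hmax : IsLocalRing.maximalIdeal R = Ideal.span {π})
    (hnil : π ^ s = 0) (hnil' : π ^ (s - 1) ≠ 0)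
    (hq : Nat.card (IsLocalRing.ResidueField R) = q)
    (V : Set R) (hV : IsCompleteResidues π V)
    {n m : ℕ} (A : Matrix (Fin n) (Fin m) R) (hA : IsRCF π s V A)
    (k : Fin n) (hk : A k ≠ 0) (c : Fin m) (hc : IsPivotIdx π s (A k) c) :
    (∀ i : Fin n, k ≤ i → ∀ j : Fin m, degR π s (A k c) ≤ degR π s (A i j)) ∧
    (∀ i : Fin n, ∀ j : Fin m, ((k ≤ i ∧ j < c) ∨ (k < i ∧ j ≤ c)) →
      degR π s (A k c) < degR π s (A i j)) :=
  rcf_degree_bounds_general s π V A hA k hk c hc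
end

section
/- Let R be a (q,s) chain ring and let n ≤ m. Then the number of full-row-rank matrices in R^{n×m} (matrices of rank n) equals q^{snm} · ∏_{i=0}^{n−1}(1 − q^{i−m}). -/
open scoped BigOperators

/-!
The rows of `A` span a copy of `R^n` exactly when they are linearly independent over `R`, because
a surjective endomorphism of `R^n` is injective. Since `π^(s-1)` is a nonzero element killed by
the maximal ideal, this happens exactly when the reductions of the rows modulo `π` are linearly
independent over the residue field `𝔽_q`. Hence the count is the number `∏ (q^m - q^i)` of
full-rank `n × m` matrices over `𝔽_q`, times the size `|⟨π⟩|^(nm) = q^((s-1)nm)` of each fibre of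
the reduction map; `|⟨π⟩| = q^(s-1)` because each `⟨π^j⟩/⟨π^(j+1)⟩` is a copy of `𝔽_q`.
-/

open IsLocalRing

theorem AddMonoidHom.card_preimage_of_surjective {G H : Type*} [AddGroup G] [AddGroup H]
    (f : G →+ H) (hf : Function.Surjective f) (t : Set H) :
    Nat.card (f ⁻¹' t) = Nat.card f.ker * Nat.card t := by
  let e := QuotientAddGroup.quotientKerEquivOfSurjective f hf
  have : f ⁻¹' t = QuotientAddGroup.mk ⁻¹' (e ⁻¹' t) := rfl
  rw [this, Nat.card_congr (QuotientAddGroup.preimageMkEquivAddSubgroupProdSet _ _), Nat.card_prod,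
    Nat.card_preimage_of_injective e.injective (by simp [e.surjective.range_eq])]

theorem AddMonoidHom.card_ker_mapMatrix {m n α β : Type*} [Finite m] [Finite n]
    [AddGroup α] [AddGroup β] (f : α →+ β) :
    Nat.card (f.mapMatrix : Matrix m n α →+ Matrix m n β).ker =
      Nat.card f.ker ^ (Nat.card m * Nat.card n) := by
  let e : (f.mapMatrix : Matrix m n α →+ Matrix m n β).ker ≃ (m → n → f.ker) :=
    { toFun := fun A i j => ⟨A.1 i j, congr_fun (congr_fun A.2 i) j⟩
      invFun := fun A => ⟨fun i j => A i j, by ext i j; exact (A i j).2⟩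
      left_inv := fun _ => rfl
      right_inv := fun _ => rfl }
  rw [Nat.card_congr e, Nat.card_fun, Nat.card_fun, ← pow_mul, mul_comm]

theorem AddMonoidHom.card_preimage_mapMatrix {m n α β : Type*} [Finite m] [Finite n]
    [AddGroup α] [AddGroup β] (f : α →+ β) (hf : Function.Surjective f)
    (t : Set (Matrix m n β)) :
    Nat.card (f.mapMatrix ⁻¹' t) = Nat.card f.ker ^ (Nat.card m * Nat.card n) * Nat.card t := by
  rw [card_preimage_of_surjective (f.mapMatrix : Matrix m n α →+ Matrix m n β)
    hf.comp_left.comp_left, card_ker_mapMatrix]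

theorem nonempty_span_range_linearEquiv_pi_iff {R M ι : Type*} [CommRing R] [AddCommGroup M]
    [Module R M] [Fintype ι] (v : ι → M) :
    Nonempty (Submodule.span R (Set.range v) ≃ₗ[R] (ι → R)) ↔ LinearIndependent R v := by
  refine ⟨fun ⟨e⟩ => ?_, fun h => ⟨h.linearCombinationEquiv.symm ≪≫ₗ
    Finsupp.linearEquivFunOnFinite R R ι⟩⟩
  let g := (Fintype.linearCombination R v).codRestrict (Submodule.span R (Set.range v))
    fun c => Fintype.range_linearCombination R v ▸ LinearMap.mem_range_self _ c
  have hg : Function.Surjective g := by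
    rintro ⟨y, hy⟩
    rw [← Fintype.range_linearCombination] at hy
    obtain ⟨c, rfl⟩ := hy
    exact ⟨c, rfl⟩
  have hinj := OrzechProperty.injective_of_surjective_endomorphism (e.toLinearMap ∘ₗ g)
    (e.surjective.comp hg)
  rw [linearIndependent_iff_injective_fintypeLinearCombination]
  exact fun a b hab => hinj (congrArg e (Subtype.ext hab))

namespace IsLocalRing

instance finite_residueField {R : Type*} [CommRing R] [IsLocalRing R] [Finite R] :
    Finite (ResidueField R) :=
  Finite.of_surjective _ residue_surjective

theorem linearIndependent_residue_iff {R ι κ : Type*} [CommRing R] [IsLocalRing R] [Fintype ι]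
    [Fintype κ] [DecidableEq κ] {x : R} (hx₀ : x ≠ 0) (hx : ∀ y ∈ maximalIdeal R, x * y = 0)
    (v : ι → κ → R) :
    LinearIndependent (ResidueField R) (fun i j => residue R (v i j)) ↔ LinearIndependent R v := by
  constructor
  · intro h
    refine Module.IsLocalRing.linearIndependent_of_flat v ?_
    let e := TensorProduct.piScalarRight R (ResidueField R) (ResidueField R) κ
    have he : TensorProduct.mk R (ResidueField R) (κ → R) 1 ∘ v =
        e.symm ∘ fun i j => residue R (v i j) := by
      funext i
      apply e.injective
      funext j
      simp [e, Algebra.smul_def]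
    rw [he]
    exact h.map' e.symm.toLinearMap e.symm.ker
  · rw [Fintype.linearIndependent_iff, Fintype.linearIndependent_iff]
    intro h g hg i
    obtain ⟨c, rfl⟩ := (residue_surjective (R := R)).comp_left g
    -- `x` turns a lift of the relation `g` over the residue field into a relation over `R`
    have hrel : ∑ i, (x * c i) • v i = 0 := by
      funext j
      have hm : ∑ i, c i * v i j ∈ maximalIdeal R := by
        rw [← residue_eq_zero_iff]
        simpa using congr_fun hg j
      simpa [Finset.mul_sum, mul_assoc] using hx _ hm
    by_contra hci
    exact hx₀ ((isUnit_of_map_unit (residue R) _ (isUnit_iff_ne_zero.mpr hci)).mul_left_eq_zero.mp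
      (h _ hrel i))

section Uniformizer

variable {R : Type*} [CommRing R] [IsLocalRing R] {π : R}

theorem pow_mul_mem_span_pow_succ_iff (hmax : maximalIdeal R = Ideal.span {π}) {j : ℕ}
    (hj : π ^ j ≠ 0) (x : R) :
    π ^ j * x ∈ Ideal.span {π ^ (j + 1)} ↔ x ∈ maximalIdeal R := by
  rw [hmax, Ideal.mem_span_singleton, Ideal.mem_span_singleton]
  constructor
  · rintro ⟨y, hy⟩
    have hzero : π ^ j * (x - π * y) = 0 := by rw [mul_sub, hy]; ring
    have hπy : π * y ∈ maximalIdeal R := hmax ▸ Ideal.mem_span_singleton.mpr (dvd_mul_right π y)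
    rw [← Ideal.mem_span_singleton, ← hmax]
    by_contra hx
    have hunit : IsUnit (x - π * y) := by
      by_contra h
      exact hx (by simpa using add_mem ((mem_maximalIdeal _).mpr h) hπy)
    exact hj (hunit.mul_left_eq_zero.mp hzero)
  · rintro ⟨y, rfl⟩
    exact ⟨y, by ring⟩

theorem card_quotient_span_pow_succ [Finite R] (hmax : maximalIdeal R = Ideal.span {π}) {j : ℕ}
    (hj : π ^ j ≠ 0) :
    Nat.card (R ⧸ Ideal.span {π ^ (j + 1)}) =
      Nat.card (ResidueField R) * Nat.card (R ⧸ Ideal.span {π ^ j}) := by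
  let I : Ideal R := Ideal.span {π ^ (j + 1)}
  let J : Ideal R := Ideal.span {π ^ j}
  have hIJ : I ≤ J := Ideal.span_singleton_le_span_singleton.mpr (pow_dvd_pow π j.le_succ)
  let f : R →ₗ[R] R ⧸ I := I.mkQ ∘ₗ LinearMap.toSpanSingleton R R (π ^ j)
  have hker : LinearMap.ker f = maximalIdeal R := by
    ext x
    rw [LinearMap.mem_ker, ← pow_mul_mem_span_pow_succ_iff hmax hj x]
    simp only [f, LinearMap.comp_apply, LinearMap.toSpanSingleton_apply, smul_eq_mul,
      Submodule.mkQ_apply, Submodule.Quotient.mk_eq_zero, mul_comm, I]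
  have hrange : LinearMap.range f = Submodule.map I.mkQ J := by
    rw [LinearMap.range_comp, LinearMap.range_toSpanSingleton]
  rw [Submodule.card_eq_card_quotient_mul_card (Submodule.map I.mkQ J),
    Nat.card_congr (Submodule.quotientQuotientEquivQuotient I J hIJ).toEquiv, ← hrange,
    ← Nat.card_congr f.quotKerEquivRange.toEquiv, hker]
  rfl

theorem card_quotient_span_pow_succ_eq [Finite R] (hmax : maximalIdeal R = Ideal.span {π})
    {j : ℕ} (hj : π ^ j ≠ 0) :
    Nat.card (R ⧸ Ideal.span {π ^ (j + 1)}) = Nat.card (ResidueField R) ^ (j + 1) := by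
  induction j with
  | zero => rw [zero_add, pow_one, pow_one, ← hmax]; rfl
  | succ j ih =>
    rw [card_quotient_span_pow_succ hmax hj, ih (right_ne_zero_of_mul (pow_succ' π j ▸ hj)),
      pow_succ' _ (j + 1)]

theorem card_eq_card_residueField_pow [Finite R] (hmax : maximalIdeal R = Ideal.span {π}) {t : ℕ}
    (hnil : π ^ (t + 1) = 0) (hnil' : π ^ t ≠ 0) :
    Nat.card R = Nat.card (ResidueField R) ^ (t + 1) := by
  rw [← card_quotient_span_pow_succ_eq hmax hnil', hnil, Ideal.span_singleton_eq_bot.mpr rfl]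
  exact Nat.card_congr (Submodule.quotEquivOfEqBot ⊥ rfl).toEquiv.symm

theorem card_maximalIdeal [Finite R] (hmax : maximalIdeal R = Ideal.span {π}) {t : ℕ}
    (hnil : π ^ (t + 1) = 0) (hnil' : π ^ t ≠ 0) :
    Nat.card (maximalIdeal R) = Nat.card (ResidueField R) ^ t := by
  have h := Submodule.card_eq_card_quotient_mul_card (maximalIdeal R)
  rw [card_eq_card_residueField_pow hmax hnil hnil', pow_succ] at h
  exact (Nat.eq_of_mul_eq_mul_right Nat.card_pos h).symm

end Uniformizer

end IsLocalRing

theorem shapeLast_const {s : ℕ} (hs : 0 < s) (n : ℕ) : shapeLast (fun _ : Fin s => n) = n :=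
  Finset.sup_const (Finset.univ_nonempty_iff.mpr (Fin.pos_iff_nonempty.mp hs)) n

theorem shapeModule_const {R : Type*} [CommRing R] (π : R) {s : ℕ} (hs : 0 < s) (n : ℕ) :
    shapeModule R π (fun _ : Fin s => n) = ⊤ := by
  refine eq_top_iff.mpr fun x _ => Submodule.mem_pi.mpr fun j _ => ?_
  have hj : (j : ℕ) < n := j.isLt.trans_eq (shapeLast_const hs n)
  have : shapeExp (fun _ : Fin s => n) j = 0 :=
    Finset.card_eq_zero.mpr (Finset.filter_eq_empty_iff.mpr fun _ _ => hj.not_ge)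
  rw [this, pow_zero, Ideal.span_singleton_one]
  trivial

theorem hasShape_const_iff {R M : Type*} [CommRing R] [AddCommGroup M] [Module R M] (π : R) {s : ℕ}
    (hs : 0 < s) {n : ℕ} :
    HasShape R π (fun _ : Fin s => n) M ↔ Nonempty (M ≃ₗ[R] (Fin n → R)) := by
  let e : shapeModule R π (fun _ : Fin s => n) ≃ₗ[R] (Fin n → R) :=
    LinearEquiv.ofTop _ (shapeModule_const π hs n) ≪≫ₗ
      LinearEquiv.funCongrLeft R R (finCongr (shapeLast_const hs n)).symm
  exact ⟨fun ⟨f⟩ => ⟨f ≪≫ₗ e⟩, fun ⟨f⟩ => ⟨f ≪≫ₗ e.symm⟩⟩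

theorem cast_prod_pow_sub_pow {q : ℕ} (hq : 0 < q) {n m : ℕ} (hnm : n ≤ m) :
    ((∏ i : Fin n, (q ^ m - q ^ (i : ℕ)) : ℕ) : ℝ) =
      (q : ℝ) ^ (n * m) * ∏ i ∈ Finset.range n, (1 - (q : ℝ) ^ ((i : ℤ) - (m : ℤ))) := by
  have hpow : (q : ℝ) ^ (n * m) = ∏ _i ∈ Finset.range n, (q : ℝ) ^ m := by
    rw [Finset.prod_const, Finset.card_range, pow_mul']
  rw [Nat.cast_prod, Fin.prod_univ_eq_prod_range (fun i => ((q ^ m - q ^ i : ℕ) : ℝ)), hpow,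
    ← Finset.prod_mul_distrib]
  refine Finset.prod_congr rfl fun i hi => ?_
  have hq' : (q : ℝ) ≠ 0 := by positivity
  rw [Nat.cast_sub (Nat.pow_le_pow_right hq ((Finset.mem_range.mp hi).le.trans hnm)), mul_sub,
    mul_one, ← zpow_natCast, ← zpow_add₀ hq', add_sub_cancel]
  push_cast
  rfl

theorem card_full_row_rank_general {R : Type*} [CommRing R] [Fintype R] [IsLocalRing R]
    (q s : ℕ) (hs : 0 < s) (π : R)
    (hmax : IsLocalRing.maximalIdeal R = Ideal.span {π})
    (hnil : π ^ s = 0) (hnil' : π ^ (s - 1) ≠ 0)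
    (hq : Nat.card (IsLocalRing.ResidueField R) = q)
    {n m : ℕ} (hnm : n ≤ m) :
    (Nat.card {A : Matrix (Fin n) (Fin m) R |
        HasShape R π (fun _ : Fin s => n) ↥(rowSpan R A)} : ℝ) =
      (q : ℝ) ^ (s * n * m) *
        ∏ i ∈ Finset.range n, (1 - (q : ℝ) ^ ((i : ℤ) - (m : ℤ))) := by
  have : Fintype (ResidueField R) := Fintype.ofFinite _
  rw [← Nat.sub_one_add_one hs.ne'] at hnil
  have hsocle : ∀ y ∈ maximalIdeal R, π ^ (s - 1) * y = 0 := by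
    intro y hy
    obtain ⟨z, rfl⟩ := Ideal.mem_span_singleton.mp (hmax ▸ hy)
    rw [← mul_assoc, ← pow_succ, hnil, zero_mul]
  have hrows : {A : Matrix (Fin n) (Fin m) R | HasShape R π (fun _ : Fin s => n) (rowSpan R A)} =
      (residue R).toAddMonoidHom.mapMatrix ⁻¹' {B | LinearIndependent (ResidueField R) B} :=
    Set.ext fun A => (hasShape_const_iff π hs).trans <|
      (nonempty_span_range_linearEquiv_pi_iff _).trans
        (linearIndependent_residue_iff hnil' hsocle A).symm
  have hker : Nat.card (residue R).toAddMonoidHom.ker = Nat.card (maximalIdeal R) :=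
    Nat.card_congr (Equiv.subtypeEquivRight residue_eq_zero_iff)
  have hli : Nat.card {B : Matrix (Fin n) (Fin m) (ResidueField R) |
      LinearIndependent (ResidueField R) B} = ∏ i : Fin n, (q ^ m - q ^ (i : ℕ)) := by
    have := card_linearIndependent (K := ResidueField R) (V := Fin m → ResidueField R)
      (k := n) ((Module.finrank_fin_fun _).ge.trans' hnm)
    rwa [Module.finrank_fin_fun, ← Nat.card_eq_fintype_card, hq] at this
  rw [hrows, AddMonoidHom.card_preimage_mapMatrix _ residue_surjective, hker, hli,
    card_maximalIdeal hmax hnil hnil', hq, Nat.card_fin, Nat.card_fin, Nat.cast_mul,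
    cast_prod_pow_sub_pow (hq ▸ Nat.card_pos) hnm]
  push_cast
  rw [← mul_assoc, ← pow_mul, ← pow_add, ← add_one_mul, Nat.sub_one_add_one hs.ne', mul_assoc]

/-- The number of full-row-rank `n × m` matrices over a `(q,s)` chain ring, for
`n ≤ m`, equals `q^(snm) · ∏_(i=0)^(n-1) (1 - q^(i-m))`. -/
theorem card_full_row_rank {R : Type*} [CommRing R] [Fintype R] [IsLocalRing R] [IsPrincipalIdealRing R]
    (q s : ℕ) (hs : 0 < s) (π : R)
    (hmax : IsLocalRing.maximalIdeal R = Ideal.span {π})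
    (hnil : π ^ s = 0) (hnil' : π ^ (s - 1) ≠ 0)
    (hq : Nat.card (IsLocalRing.ResidueField R) = q)
    {n m : ℕ} (hnm : n ≤ m) :
    (Nat.card {A : Matrix (Fin n) (Fin m) R |
        HasShape R π (fun _ : Fin s => n) ↥(rowSpan R A)} : ℝ) =
      (q : ℝ) ^ (s * n * m) *
        ∏ i ∈ Finset.range n, (1 - (q : ℝ) ^ ((i : ℤ) - (m : ℤ))) :=
  card_full_row_rank_general q s hs π hmax hnil hnil' hq hnm
end
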